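/- arXiv:1712.04903 — 8 statements merged into one kernel-verified Lean document; each statement's English description precedes it below -/
import Mathlib

section
/- Let (I_n : A_n → ℝ)_{n ≥ 1} satisfy the symmetry, vanishing, and chain rule properties, and define L : (0,1] → ℝ by L(α) = I_2((1,0)‖(α,1−α)). Let (p,r) ∈ A_n with p_{k+1} = ⋯ = p_n = 0, where 1 ≤ k ≤ n. Then r_1 + ⋯ + r_k > 0 and I_n(p‖r) = L(r_1 + ⋯ + r_k) + I_k(p′‖r′), where p′ = (p_1,…,p_k) and r′ = (r_1,…,r_k)/(r_1 + ⋯ + r_k). -/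
open Finset MeasureTheory

/-- `p` is a probability distribution on `{1, …, n}` (i.e. `p ∈ Δₙ`). -/
def IsDist {n : ℕ} (p : Fin n → ℝ) : Prop :=
  (∀ i, 0 ≤ p i) ∧ ∑ i, p i = 1

/-- `(p, r) ∈ Aₙ`: both are distributions and `p` is absolutely continuous
with respect to `r`. -/
def RelPair {n : ℕ} (p r : Fin n → ℝ) : Prop :=
  IsDist p ∧ IsDist r ∧ ∀ i, r i = 0 → p i = 0

/-- Decomposition of a sigma type over `Fin (n + 1)`. -/
def sigmaFinSuccEquiv {n : ℕ} (k : Fin (n + 1) → ℕ) :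
    (Σ i : Fin (n + 1), Fin (k i)) ≃ (Fin (k 0) ⊕ Σ i : Fin n, Fin (k i.succ)) where
  toFun x :=
    Fin.cases (motive := fun i => Fin (k i) → Fin (k 0) ⊕ Σ i : Fin n, Fin (k i.succ))
      (fun j => Sum.inl j) (fun i j => Sum.inr ⟨i, j⟩) x.1 x.2
  invFun y := y.elim (fun j => ⟨0, j⟩) fun x => ⟨x.1.succ, x.2⟩
  left_inv := by rintro ⟨i, j⟩; induction i using Fin.cases <;> rfl
  right_inv := by rintro (j | ⟨i, j⟩) <;> rfl

/-- The lexicographic equivalence `(Σ i : Fin n, Fin (k i)) ≃ Fin (k 1 + ⋯ + k n)`,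
sending `(i, j)` to `k 1 + ⋯ + k (i - 1) + j`. -/
def finSigmaEquiv : ∀ {n : ℕ} (k : Fin n → ℕ), (Σ i : Fin n, Fin (k i)) ≃ Fin (∑ i, k i)
  | 0, _ => (Equiv.equivOfIsEmpty _ (Fin 0)).trans (finCongr (by simp))
  | n + 1, k =>
      (sigmaFinSuccEquiv k).trans <|
        ((Equiv.refl (Fin (k 0))).sumCongr (finSigmaEquiv fun i => k i.succ)).trans <|
          finSumFinEquiv.trans (finCongr (Fin.sum_univ_succ k).symm)

/-- The composite distribution
`w ∘ (p¹, …, pⁿ) = (w₁p¹₁, …, w₁p¹_{k₁}, …, wₙpⁿ₁, …, wₙpⁿ_{kₙ}) ∈ Δ_{k₁+⋯+kₙ}`. -/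
def comp {n : ℕ} (k : Fin n → ℕ) (w : Fin n → ℝ)
    (p : ∀ i, Fin (k i) → ℝ) : Fin (∑ i, k i) → ℝ :=
  fun j => w ((finSigmaEquiv k).symm j).1 * p _ ((finSigmaEquiv k).symm j).2

/-- Symmetry: `I(p ‖ r) = I(pσ ‖ rσ)` for every permutation `σ`,
where `(pσ)ᵢ = p_{σ(i)}`. -/
def SymmRel (I : ∀ n : ℕ, (Fin n → ℝ) → (Fin n → ℝ) → ℝ) : Prop :=
  ∀ (n : ℕ) (p r : Fin n → ℝ) (σ : Equiv.Perm (Fin n)),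
    RelPair p r → I n p r = I n (p ∘ σ) (r ∘ σ)

/-- Vanishing: `I(p ‖ p) = 0`. -/
def Vanishing (I : ∀ n : ℕ, (Fin n → ℝ) → (Fin n → ℝ) → ℝ) : Prop :=
  ∀ (n : ℕ) (p : Fin n → ℝ), IsDist p → I n p p = 0

/-- The chain rule:
`I(w∘(p¹,…,pⁿ) ‖ w̃∘(p̃¹,…,p̃ⁿ)) = I(w ‖ w̃) + ∑ᵢ wᵢ I(pⁱ ‖ p̃ⁱ)`. -/
def ChainRule (I : ∀ n : ℕ, (Fin n → ℝ) → (Fin n → ℝ) → ℝ) : Prop :=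
  ∀ (n : ℕ) (k : Fin n → ℕ) (w w' : Fin n → ℝ) (p p' : ∀ i, Fin (k i) → ℝ),
    RelPair w w' → (∀ i, RelPair (p i) (p' i)) →
    I (∑ i, k i) (comp k w p) (comp k w' p') =
      I n w w' + ∑ i, w i * I (k i) (p i) (p' i)

lemma fse0 (a b : ℕ) (j : Fin (![a,b] 0)) : ((finSigmaEquiv ![a,b]) ⟨0, j⟩ : ℕ) = j := rfl

lemma fse1 (a b : ℕ) (j : Fin (![a,b] 1)) : ((finSigmaEquiv ![a,b]) ⟨1, j⟩ : ℕ) = a + j := rfl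

lemma comp_apply' {n : ℕ} (k : Fin n → ℕ) (w : Fin n → ℝ) (P : ∀ i, Fin (k i) → ℝ)
    (x : Σ i, Fin (k i)) :
    comp k w P ((finSigmaEquiv k) x) = w x.1 * P x.1 x.2 := by
  simp only [comp]
  rw [Equiv.symm_apply_apply]

lemma I_congr (I : ∀ n : ℕ, (Fin n → ℝ) → (Fin n → ℝ) → ℝ) {a b : ℕ} (h : a = b)
    {f g : Fin a → ℝ} {f' g' : Fin b → ℝ}
    (hf : ∀ j : Fin a, f j = f' (Fin.cast h j)) (hg : ∀ j, g j = g' (Fin.cast h j)) :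
    I a f g = I b f' g' := by
  subst h
  have h1 : f = f' := funext fun j => hf j
  have h2 : g = g' := funext fun j => hg j
  rw [h1, h2]


/-- Lemma 2.2 of the paper: if `p_{k+1} = ⋯ = pₙ = 0` then `r₁ + ⋯ + r_k > 0` and
`I(p ‖ r) = L(r₁ + ⋯ + r_k) + I(p' ‖ r')`, where `L(α) = I((1,0) ‖ (α, 1-α))`,
`p' = (p₁, …, p_k)` and `r' = (r₁, …, r_k)/(r₁ + ⋯ + r_k)`. -/
theorem relent_lemma_zeros (I : ∀ n : ℕ, (Fin n → ℝ) → (Fin n → ℝ) → ℝ)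
    (hS : SymmRel I) (hV : Vanishing I) (hC : ChainRule I)
    (n k : ℕ) (hk : 1 ≤ k) (hkn : k ≤ n) (p r : Fin n → ℝ) (hpr : RelPair p r)
    (hz : ∀ i : Fin n, k ≤ (i : ℕ) → p i = 0) :
    0 < ∑ i : Fin k, r (Fin.castLE hkn i) ∧
      I n p r =
        I 2 ![1, 0] ![∑ i : Fin k, r (Fin.castLE hkn i),
            1 - ∑ i : Fin k, r (Fin.castLE hkn i)] +
          I k (fun i => p (Fin.castLE hkn i))
            (fun i => r (Fin.castLE hkn i) / ∑ j : Fin k, r (Fin.castLE hkn j)) := by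
  obtain ⟨⟨hp0, hp1⟩, ⟨hr0, hr1⟩, hac⟩ := hpr
  obtain ⟨m, rfl⟩ : ∃ m, n = k + m := ⟨n - k, by omega⟩
  set α := ∑ i : Fin k, r (Fin.castLE hkn i) with hαdef
  have hd10 : IsDist ![(1:ℝ), 0] := ⟨fun i => by fin_cases i <;> norm_num, by
    rw [Fin.sum_univ_two]; norm_num⟩
  -- sum splits
  have hsplit_r : α + ∑ j : Fin m, r (Fin.natAdd k j) = 1 := by
    rw [← hr1, hαdef]
    exact (Fin.sum_univ_add (f := r)).symm
  have hp_first : ∑ i : Fin k, p (Fin.castLE hkn i) = 1 := by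
    have h := Fin.sum_univ_add (f := p)
    have h2 : ∑ j : Fin m, p (Fin.natAdd k j) = 0 :=
      Finset.sum_eq_zero fun j _ => hz _ (by simp)
    rw [h2, add_zero] at h
    rw [← hp1, h]
    exact Finset.sum_congr rfl fun i _ => congrArg p (Fin.ext rfl)
  have hαnn : 0 ≤ α := Finset.sum_nonneg fun i _ => hr0 _
  have hαpos : 0 < α := by
    rcases hαnn.lt_or_eq with h | h
    · exact h
    · exfalso
      have hr00 : ∀ i ∈ Finset.univ, r (Fin.castLE hkn i) = 0 :=
        (Finset.sum_eq_zero_iff_of_nonneg fun i _ => hr0 _).mp h.symm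
      have : ∑ i : Fin k, p (Fin.castLE hkn i) = 0 :=
        Finset.sum_eq_zero fun i hi => hac _ (hr00 i hi)
      rw [hp_first] at this
      norm_num at this
  refine ⟨hαpos, ?_⟩
  set β := (1 : ℝ) - α with hβdef
  have hβsum : β = ∑ j : Fin m, r (Fin.natAdd k j) := by rw [hβdef]; linarith
  have hβnn : 0 ≤ β := hβsum ▸ Finset.sum_nonneg fun j _ => hr0 _
  have hαne : α ≠ 0 := hαpos.ne'
  rcases Nat.eq_zero_or_pos m with hm0 | hm
  · -- case m = 0
    subst hm0
    have hα1 : α = 1 := by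
      have h0 : (∑ j : Fin 0, r (Fin.natAdd k j)) = 0 := rfl
      linarith [hsplit_r]
    have hβ0 : β = 0 := by rw [hβdef, hα1]; ring
    rw [hα1, hβ0, hV 2 ![1, 0] hd10, zero_add]
    exact I_congr I rfl (fun j => by congr 1)
      (fun j => by rw [div_one]; congr 1)
  · -- case m ≥ 1
    obtain ⟨s, hs_dist, hs_mul⟩ :
        ∃ s : Fin m → ℝ, IsDist s ∧ ∀ j, β * s j = r (Fin.natAdd k j) := by
      by_cases hβz : β = 0
      · refine ⟨fun j => if j = ⟨0, hm⟩ then 1 else 0,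
          ⟨fun j => by positivity, by simp⟩, fun j => ?_⟩
        have hr0' : ∀ j ∈ Finset.univ, r (Fin.natAdd k j) = 0 :=
          (Finset.sum_eq_zero_iff_of_nonneg fun j _ => hr0 _).mp (by rw [← hβsum]; exact hβz)
        rw [hβz, zero_mul, hr0' j (Finset.mem_univ j)]
      · refine ⟨fun j => r (Fin.natAdd k j) / β,
          ⟨fun j => div_nonneg (hr0 _) hβnn, ?_⟩, fun j => mul_div_cancel₀ _ hβz⟩
        rw [← Finset.sum_div, ← hβsum, div_self hβz]
    -- the two block families
    set P : ∀ i : Fin 2, Fin (![k, m] i) → ℝ :=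
      Fin.cons (fun i => p (Fin.castLE hkn i)) (Fin.cons s (fun i : Fin 0 => i.elim0)) with hP
    set P' : ∀ i : Fin 2, Fin (![k, m] i) → ℝ :=
      Fin.cons (fun i => r (Fin.castLE hkn i) / α) (Fin.cons s (fun i : Fin 0 => i.elim0)) with hP'
    have hrelw : RelPair ![1, 0] ![α, β] := by
      refine ⟨hd10,
        ⟨fun i => by fin_cases i <;> simp [hαnn, hβnn], by
          rw [Fin.sum_univ_two]
          show α + β = 1
          rw [hβdef]; ring⟩, fun i hi => ?_⟩
      fin_cases i
      · exact absurd hi hαne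
      · simp
    have hrelp : ∀ i : Fin 2, RelPair (P i) (P' i) := by
      intro i
      induction i using Fin.cases with
      | zero =>
        rw [hP, hP']
        simp only [Fin.cons_zero]
        refine ⟨⟨fun i => hp0 _, ?_⟩,
          ⟨fun i => div_nonneg (hr0 _) hαnn, ?_⟩, fun i hi => ?_⟩
        · show ∑ i : Fin k, p (Fin.castLE hkn i) = 1
          exact hp_first
        · show ∑ i : Fin k, r (Fin.castLE hkn i) / α = 1
          rw [← Finset.sum_div, ← hαdef, div_self hαne]
        · rcases div_eq_zero_iff.mp hi with h | h
          · exact hac _ h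
          · exact absurd h hαne
      | succ i1 =>
        have hi1 : i1 = 0 := Subsingleton.elim _ _
        subst hi1
        rw [hP, hP']
        simp only [Fin.cons_succ, Fin.cons_zero]
        exact ⟨hs_dist, hs_dist, fun _ h => h⟩
    have key := hC 2 ![k, m] ![1, 0] ![α, β] P P' hrelw hrelp
    have hsum2 : (∑ i, ![k, m] i) = k + m := by simp [Fin.sum_univ_two]
    have hcompP : ∀ j : Fin (∑ i, ![k, m] i),
        comp ![k, m] ![1, 0] P j = p (Fin.cast hsum2 j) := by
      intro j
      obtain ⟨⟨i, jj⟩, rfl⟩ := (finSigmaEquiv ![k, m]).surjective j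
      rw [comp_apply']
      revert jj
      refine Fin.cases ?_ ?_ i
      · intro jj
        have he : Fin.cast hsum2 (finSigmaEquiv ![k, m] ⟨0, jj⟩) = Fin.castLE hkn jj :=
          Fin.ext (by rw [Fin.coe_cast]; exact fse0 k m jj)
        rw [he]
        show (1 : ℝ) * p (Fin.castLE hkn jj) = p (Fin.castLE hkn jj)
        rw [one_mul]
      · intro i1 jj
        have hi1 : i1 = 0 := Subsingleton.elim _ _
        subst hi1
        have hval : k ≤ ((Fin.cast hsum2 (finSigmaEquiv ![k, m] ⟨Fin.succ 0, jj⟩)) : ℕ) := by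
          rw [Fin.coe_cast]
          have h1 : ((finSigmaEquiv ![k, m]) ⟨Fin.succ 0, jj⟩ : ℕ) = k + jj := fse1 k m jj
          omega
        rw [hz _ hval]
        show (0 : ℝ) * s jj = 0
        rw [zero_mul]
    have hcompR : ∀ j : Fin (∑ i, ![k, m] i),
        comp ![k, m] ![α, β] P' j = r (Fin.cast hsum2 j) := by
      intro j
      obtain ⟨⟨i, jj⟩, rfl⟩ := (finSigmaEquiv ![k, m]).surjective j
      rw [comp_apply']
      revert jj
      refine Fin.cases ?_ ?_ i
      · intro jj
        have he : Fin.cast hsum2 (finSigmaEquiv ![k, m] ⟨0, jj⟩) = Fin.castLE hkn jj :=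
          Fin.ext (by rw [Fin.coe_cast]; exact fse0 k m jj)
        rw [he]
        show α * (r (Fin.castLE hkn jj) / α) = r (Fin.castLE hkn jj)
        exact mul_div_cancel₀ _ hαne
      · intro i1 jj
        have hi1 : i1 = 0 := Subsingleton.elim _ _
        subst hi1
        have he : Fin.cast hsum2 (finSigmaEquiv ![k, m] ⟨Fin.succ 0, jj⟩) = Fin.natAdd k jj :=
          Fin.ext (by rw [Fin.coe_cast]; exact fse1 k m jj)
        rw [he]
        show β * s jj = r (Fin.natAdd k jj)
        exact hs_mul jj
    rw [I_congr I hsum2 hcompP hcompR] at key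
    rw [key, Fin.sum_univ_two]
    have e0 : ![(1:ℝ), 0] 0 = 1 := rfl
    have e1 : ![(1:ℝ), 0] 1 = 0 := rfl
    rw [e0, e1, one_mul, zero_mul, add_zero]
    show _ = I 2 ![1, 0] ![α, β] + I k (P 0) (P' 0)
    rfl
end

section
/- Let (I_n : A_n → ℝ)_{n ≥ 1} satisfy the symmetry, vanishing, and chain rule properties, and define L : (0,1] → ℝ by L(α) = I_2((1,0)‖(α,1−α)). Then L(αβ) = L(α) + L(β) for all α, β ∈ (0,1]. -/
/-!
Both sides equal the three-point divergence `I((1,0,0) ‖ (αβ, α(1-β), 1-α))`, computed by the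
chain rule in two ways. Grouping the first two outcomes refines the first cell of `(α, 1-α)`
by `(β, 1-β)`, giving `L(α) + L(β)`. Grouping the last two refines the second cell of
`(αβ, 1-αβ)` by the normalized `(α(1-β), 1-α)` in both arguments, giving
`L(αβ) + I((1) ‖ (1)) = L(αβ)`. In both decompositions the cell of weight `0` contributes
nothing.
-/

open Finset MeasureTheory

theorem isDist_fin_two_iff {a b : ℝ} : IsDist ![a, b] ↔ 0 ≤ a ∧ 0 ≤ b ∧ a + b = 1 := by
  simp [IsDist, Fin.forall_fin_two, and_assoc]

theorem isDist_one : IsDist ![(1 : ℝ)] := by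
  simp [IsDist]

theorem RelPair.refl {n : ℕ} {p : Fin n → ℝ} (hp : IsDist p) : RelPair p p :=
  ⟨hp, hp, fun _ h => h⟩

theorem relPair_one_zero {a : ℝ} (ha : a ∈ Set.Ioc (0 : ℝ) 1) : RelPair ![1, 0] ![a, 1 - a] := by
  obtain ⟨ha0, ha1⟩ := ha
  refine ⟨isDist_fin_two_iff.2 (by norm_num),
    isDist_fin_two_iff.2 ⟨ha0.le, by linarith, by ring⟩, ?_⟩
  simp [Fin.forall_fin_two, ha0.ne']

theorem exists_isDist_mul_eq {a b : ℝ} (ha : 0 ≤ a) (hb : 0 ≤ b) :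
    ∃ q : Fin 2 → ℝ, IsDist q ∧ (a + b) * q 0 = a ∧ (a + b) * q 1 = b := by
  rcases (add_nonneg ha hb).eq_or_lt with hab | hab
  · refine ⟨![1, 0], isDist_fin_two_iff.2 (by norm_num), ?_, ?_⟩ <;> simp <;> linarith
  · refine ⟨![a / (a + b), b / (a + b)], isDist_fin_two_iff.2 ⟨by positivity, by positivity, ?_⟩,
      ?_, ?_⟩
    · rw [← add_div, div_self hab.ne']
    all_goals simp [mul_div_cancel₀ _ hab.ne']

def blockPair {k₀ k₁ : ℕ} (p : Fin k₀ → ℝ) (q : Fin k₁ → ℝ) :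
    ∀ i : Fin 2, Fin (![k₀, k₁] i) → ℝ :=
  Fin.cons p (Fin.cons q finZeroElim)

theorem comp_two_one (w p : Fin 2 → ℝ) (q : Fin 1 → ℝ) :
    (comp ![2, 1] w (blockPair p q) : Fin 3 → ℝ) = ![w 0 * p 0, w 0 * p 1, w 1 * q 0] := by
  funext j; fin_cases j <;> rfl

theorem comp_one_two (w : Fin 2 → ℝ) (p : Fin 1 → ℝ) (q : Fin 2 → ℝ) :
    (comp ![1, 2] w (blockPair p q) : Fin 3 → ℝ) = ![w 0 * p 0, w 1 * q 0, w 1 * q 1] := by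
  funext j; fin_cases j <;> rfl

section

variable {I : ∀ n : ℕ, (Fin n → ℝ) → (Fin n → ℝ) → ℝ}

theorem ChainRule.apply_fin_two (hC : ChainRule I)
    {k₀ k₁ : ℕ} {w w' : Fin 2 → ℝ} {p p' : Fin k₀ → ℝ} {q q' : Fin k₁ → ℝ}
    (hw : RelPair w w') (hp : RelPair p p') (hq : RelPair q q') :
    I (∑ i, ![k₀, k₁] i) (comp ![k₀, k₁] w (blockPair p q))
        (comp ![k₀, k₁] w' (blockPair p' q')) =
      I 2 w w' + w 0 * I k₀ p p' + w 1 * I k₁ q q' := by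
  rw [hC 2 _ w w' _ _ hw (Fin.forall_fin_two.2 ⟨hp, hq⟩), Fin.sum_univ_two, add_assoc]
  rfl

theorem ChainRule.refine_first (hC : ChainRule I) {r r' : Fin 2 → ℝ}
    (hr : RelPair ![1, 0] r) (hr' : RelPair ![1, 0] r') :
    I 3 ![1, 0, 0] ![r 0 * r' 0, r 0 * r' 1, r 1] = I 2 ![1, 0] r + I 2 ![1, 0] r' := by
  have key : I 3 (comp ![2, 1] ![1, 0] (blockPair ![1, 0] ![1]))
      (comp ![2, 1] r (blockPair r' ![1])) = _ :=
    hC.apply_fin_two hr hr' (.refl isDist_one)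
  rw [comp_two_one, comp_two_one] at key
  simpa using key

theorem ChainRule.refine_second (hC : ChainRule I) (hV : Vanishing I) {r q : Fin 2 → ℝ}
    (hr : RelPair ![1, 0] r) (hq : IsDist q) :
    I 3 ![1, 0, 0] ![r 0, r 1 * q 0, r 1 * q 1] = I 2 ![1, 0] r := by
  have key : I 3 (comp ![1, 2] ![1, 0] (blockPair ![1] q))
      (comp ![1, 2] r (blockPair ![1] q)) = _ :=
    hC.apply_fin_two hr (.refl isDist_one) (.refl hq)
  rw [comp_one_two, comp_one_two, hV 1 _ isDist_one] at key
  simpa using key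

end

theorem relent_L_multiplicative_general (I : ∀ n : ℕ, (Fin n → ℝ) → (Fin n → ℝ) → ℝ)
    (hV : Vanishing I) (hC : ChainRule I)
    (α β : ℝ) (hα : α ∈ Set.Ioc (0 : ℝ) 1) (hβ : β ∈ Set.Ioc (0 : ℝ) 1) :
    I 2 ![1, 0] ![α * β, 1 - α * β] =
      I 2 ![1, 0] ![α, 1 - α] + I 2 ![1, 0] ![β, 1 - β] := by
  have hαβ : α * β ∈ Set.Ioc (0 : ℝ) 1 := ⟨mul_pos hα.1 hβ.1, mul_le_one₀ hα.2 hβ.1.le hβ.2⟩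
  obtain ⟨q, hq, hq0, hq1⟩ :=
    exists_isDist_mul_eq (mul_nonneg hα.1.le (sub_nonneg.2 hβ.2)) (sub_nonneg.2 hα.2)
  have hsplit : 1 - α * β = α * (1 - β) + (1 - α) := by ring
  calc I 2 ![1, 0] ![α * β, 1 - α * β]
      = I 3 ![1, 0, 0] ![α * β, (1 - α * β) * q 0, (1 - α * β) * q 1] :=
        (hC.refine_second hV (relPair_one_zero hαβ) hq).symm
    _ = I 3 ![1, 0, 0] ![α * β, α * (1 - β), 1 - α] := by rw [hsplit, hq0, hq1]
    _ = I 2 ![1, 0] ![α, 1 - α] + I 2 ![1, 0] ![β, 1 - β] :=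
        hC.refine_first (relPair_one_zero hα) (relPair_one_zero hβ)

/-- Lemma 2.3 of the paper: the function `L(α) = I((1,0) ‖ (α, 1-α))` satisfies
`L(αβ) = L(α) + L(β)` for all `α, β ∈ (0, 1]`. -/
theorem relent_L_multiplicative (I : ∀ n : ℕ, (Fin n → ℝ) → (Fin n → ℝ) → ℝ)
    (hS : SymmRel I) (hV : Vanishing I) (hC : ChainRule I)
    (α β : ℝ) (hα : α ∈ Set.Ioc (0 : ℝ) 1) (hβ : β ∈ Set.Ioc (0 : ℝ) 1) :
    I 2 ![1, 0] ![α * β, 1 - α * β] =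
      I 2 ![1, 0] ![α, 1 - α] + I 2 ![1, 0] ![β, 1 - β] :=
  relent_L_multiplicative_general I hV hC α β hα hβ
end

section
/- Let (I_n : A_n → ℝ)_{n ≥ 1} satisfy the measurability-in-second-argument, symmetry, vanishing, and chain rule properties, and let c ∈ ℝ be such that I_2((1,0)‖(α,1−α)) = −c log α for all α ∈ (0,1]. Let (p,r) ∈ A_n with p_i > 0 for all i ∈ {1,…,n}. Then I_n(p‖r) = c · D(p‖r), where D(p‖r) = ∑_{i : p_i > 0} p_i log(p_i / r_i). -/
open Finset MeasureTheory

/-- The relative entropy `D(p ‖ r) = ∑_{i : pᵢ > 0} pᵢ log (pᵢ / rᵢ)`. -/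
noncomputable def relent {n : ℕ} (p r : Fin n → ℝ) : ℝ :=
  ∑ i, if 0 < p i then p i * Real.log (p i / r i) else 0

/-- Lebesgue measurability of `r ↦ I(p ‖ r)` on `{r ∈ Δₙ : (p, r) ∈ Aₙ}`
(null-measurability with respect to Lebesgue measure restricted to that set). -/
def MeasurableSecond (I : ∀ n : ℕ, (Fin n → ℝ) → (Fin n → ℝ) → ℝ) : Prop :=
  ∀ (n : ℕ) (p : Fin n → ℝ), IsDist p →
    NullMeasurable (fun r => I n p r) (volume.restrict {r | RelPair p r})

private lemma myIcast (I : ∀ n : ℕ, (Fin n → ℝ) → (Fin n → ℝ) → ℝ) {m k : ℕ} (h : m = k)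
    (p r : Fin k → ℝ) : I k p r = I m (p ∘ Fin.cast h) (r ∘ Fin.cast h) := by
  subst h; rfl

private lemma comp_apply_sigma {n : ℕ} (k : Fin n → ℕ) (w : Fin n → ℝ)
    (P : ∀ i, Fin (k i) → ℝ) (y : Σ i, Fin (k i)) :
    comp k w P (finSigmaEquiv k y) = w y.1 * P y.1 y.2 := by
  simp only [comp]
  rw [Equiv.symm_apply_apply]

private lemma sum_comp' {n : ℕ} (k : Fin n → ℕ) (f : Fin (∑ i, k i) → ℝ) :
    ∑ j, f j = ∑ i, ∑ j : Fin (k i), f (finSigmaEquiv k ⟨i, j⟩) := by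
  rw [← Equiv.sum_comp (finSigmaEquiv k) f, ← Finset.univ_sigma_univ, Finset.sum_sigma]

private lemma comp_isDist {n : ℕ} {k : Fin n → ℕ} {w : Fin n → ℝ}
    {P : ∀ i, Fin (k i) → ℝ} (hw : IsDist w) (hP : ∀ i, IsDist (P i)) :
    IsDist (comp k w P) := by
  refine ⟨fun j => mul_nonneg (hw.1 _) ((hP _).1 _), ?_⟩
  rw [sum_comp' k]
  simp only [comp_apply_sigma]
  rw [Finset.sum_congr rfl (fun i _ => by rw [← Finset.mul_sum, (hP i).2, mul_one])]
  exact hw.2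

private lemma relPair_comp {n : ℕ} {k : Fin n → ℕ} {w w' : Fin n → ℝ}
    {P P' : ∀ i, Fin (k i) → ℝ} (hw : RelPair w w') (hP : ∀ i, RelPair (P i) (P' i)) :
    RelPair (comp k w P) (comp k w' P') := by
  refine ⟨comp_isDist hw.1 (fun i => (hP i).1), comp_isDist hw.2.1 (fun i => (hP i).2.1), ?_⟩
  intro j hj
  simp only [comp] at hj ⊢
  rcases mul_eq_zero.1 hj with h0 | h0
  · rw [hw.2.2 _ h0, zero_mul]
  · rw [(hP _).2.2 _ h0, mul_zero]

private def swapSigma (a b : ℕ) : (Σ _ : Fin a, Fin b) ≃ (Σ _ : Fin b, Fin a) where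
  toFun x := ⟨x.2, x.1⟩
  invFun x := ⟨x.2, x.1⟩
  left_inv _ := rfl
  right_inv _ := rfl

private lemma isDist_pair {a b : ℝ} (ha : 0 ≤ a) (hb : 0 ≤ b) (hab : a + b = 1) :
    IsDist ![a, b] := by
  constructor
  · intro j; fin_cases j <;> simpa
  · simp [Fin.sum_univ_two, hab]

/-- Lemma 2.5 of the paper: if `L(α) = I((1,0) ‖ (α, 1-α)) = -c log α` and `p` has
full support, then `I(p ‖ r) = c D(p ‖ r)`. -/
theorem relent_full_support (I : ∀ n : ℕ, (Fin n → ℝ) → (Fin n → ℝ) → ℝ)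
    (hM : MeasurableSecond I) (hS : SymmRel I) (hV : Vanishing I) (hC : ChainRule I)
    (c : ℝ) (hc : ∀ α ∈ Set.Ioc (0 : ℝ) 1, I 2 ![1, 0] ![α, 1 - α] = -c * Real.log α)
    (n : ℕ) (p r : Fin n → ℝ) (hpr : RelPair p r) (hpos : ∀ i, 0 < p i) :
    I n p r = c * relent p r := by
  have hn : n ≠ 0 := by rintro rfl; simpa using hpr.1.2
  haveI : Nonempty (Fin n) := ⟨⟨0, Nat.pos_of_ne_zero hn⟩⟩
  have hr : ∀ i, 0 < r i := by
    intro i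
    rcases lt_or_eq_of_le (hpr.2.1.1 i) with h | h
    · exact h
    · exact absurd (hpr.2.2 i h.symm) (ne_of_gt (hpos i))
  set m : ℝ := Finset.univ.inf' Finset.univ_nonempty (fun i => p i / r i) with hm
  have hm0 : 0 < m := by
    rw [hm, Finset.lt_inf'_iff]
    exact fun i _ => div_pos (hpos i) (hr i)
  set S : ℝ := min m 1 / 2 with hSdef
  have hS0 : 0 < S := by
    rw [hSdef]; have := lt_min hm0 one_pos; linarith
  have hS1 : S ≤ 1 / 2 := by
    rw [hSdef]; have : min m 1 ≤ 1 := min_le_right _ _; linarith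
  have h1S : (0 : ℝ) < 1 - S := by linarith
  have hSr : ∀ i, S * r i ≤ p i / 2 := by
    intro i
    have h1 : min m 1 ≤ p i / r i :=
      le_trans (min_le_left _ _) (Finset.inf'_le _ (Finset.mem_univ i))
    have h2 : S ≤ p i / r i / 2 := by rw [hSdef]; linarith
    calc S * r i ≤ p i / r i / 2 * r i :=
          mul_le_mul_of_nonneg_right h2 (le_of_lt (hr i))
      _ = p i / 2 := by field_simp [(hr i).ne']
  have hSrlt : ∀ i, S * r i < p i := fun i => lt_of_le_of_lt (hSr i) (by linarith [hpos i])
  -- the data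
  set td : Fin n → ℝ := fun i => (p i - S * r i) / (1 - S) with htd
  have htdDist : IsDist td := by
    constructor
    · intro i
      exact div_nonneg (by linarith [hSrlt i]) (le_of_lt h1S)
    · rw [htd]
      simp only [← Finset.sum_div, Finset.sum_sub_distrib, ← Finset.mul_sum,
        hpr.1.2, hpr.2.1.2]
      field_simp
  have hppair : RelPair p p := ⟨hpr.1, hpr.1, fun _ h => h⟩
  have hPpair : ∀ i : Fin n,
      RelPair (![(1 : ℝ), 0]) (![S * r i / p i, 1 - S * r i / p i]) := by
    intro i
    have hα0 : 0 < S * r i / p i := div_pos (mul_pos hS0 (hr i)) (hpos i)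
    have hα1 : S * r i / p i ≤ 1 := (div_le_one (hpos i)).2 (le_of_lt (hSrlt i))
    refine ⟨isDist_pair zero_le_one le_rfl (by norm_num),
      isDist_pair (le_of_lt hα0) (by linarith) (by ring), ?_⟩
    intro j hj
    fin_cases j
    · simp only [Matrix.cons_val_zero] at hj
      exact absurd hj (ne_of_gt hα0)
    · simp
  have hQpair : ∀ i : Fin 2, RelPair ((![p, td] : Fin 2 → Fin n → ℝ) i) (![r, td] i) := by
    intro i
    fin_cases i
    · simp only [Matrix.cons_val_zero]; exact hpr
    · simp only [Matrix.cons_val_one, Matrix.head_cons]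
      exact ⟨htdDist, htdDist, fun _ h => h⟩
  have hwBpair : RelPair (![(1 : ℝ), 0]) (![S, 1 - S]) := by
    refine ⟨isDist_pair zero_le_one le_rfl (by norm_num),
      isDist_pair (le_of_lt hS0) (by linarith) (by ring), ?_⟩
    intro j hj
    fin_cases j
    · simp only [Matrix.cons_val_zero] at hj
      exact absurd hj (ne_of_gt hS0)
    · simp
  -- the two chain-rule decompositions
  have hCA := hC n (fun _ => 2) p p (fun _ => ![(1 : ℝ), 0])
    (fun i => ![S * r i / p i, 1 - S * r i / p i]) hppair hPpair
  have hCB := hC 2 (fun _ => n) ![(1 : ℝ), 0] ![S, 1 - S] ![p, td] ![r, td] hwBpair hQpair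
  have hNN : (∑ _i : Fin n, 2) = (∑ _i : Fin 2, n) := by
    simp [Finset.sum_const, mul_comm]
  -- the permutation connecting the two composites
  set σ : Equiv.Perm (Fin (∑ _i : Fin n, 2)) :=
    (finCongr hNN).trans (((finSigmaEquiv (fun _ : Fin 2 => n)).symm).trans
      ((swapSigma 2 n).trans (finSigmaEquiv (fun _ : Fin n => 2)))) with hσ
  have hσx : ∀ x, σ x = finSigmaEquiv (fun _ : Fin n => 2)
      ((swapSigma 2 n) ((finSigmaEquiv (fun _ : Fin 2 => n)).symm (Fin.cast hNN x))) :=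
    fun x => rfl
  have key1 : ∀ y : Σ _ : Fin 2, Fin n,
      comp (fun _ => 2) p (fun _ => ![(1 : ℝ), 0])
        (finSigmaEquiv (fun _ : Fin n => 2) ((swapSigma 2 n) y)) =
      comp (fun _ => n) ![(1 : ℝ), 0] ![p, td] (finSigmaEquiv (fun _ : Fin 2 => n) y) := by
    rintro ⟨a, b⟩
    rw [comp_apply_sigma, comp_apply_sigma]
    show p b * ![(1 : ℝ), 0] a = ![(1 : ℝ), 0] a * ![p, td] a b
    fin_cases a <;> simp [mul_comm]
  have key2 : ∀ y : Σ _ : Fin 2, Fin n,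
      comp (fun _ => 2) p (fun i => ![S * r i / p i, 1 - S * r i / p i])
        (finSigmaEquiv (fun _ : Fin n => 2) ((swapSigma 2 n) y)) =
      comp (fun _ => n) ![S, 1 - S] ![r, td] (finSigmaEquiv (fun _ : Fin 2 => n) y) := by
    rintro ⟨a, b⟩
    rw [comp_apply_sigma, comp_apply_sigma]
    show p b * ![S * r b / p b, 1 - S * r b / p b] a = ![S, 1 - S] a * ![r, td] a b
    fin_cases a
    all_goals simp only [Fin.mk_zero, Fin.mk_one, Fin.isValue, Matrix.cons_val_zero,
      Matrix.cons_val_one, Matrix.head_cons, htd]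
    · field_simp [(hpos b).ne']
    · field_simp [(hpos b).ne', h1S.ne']
  have eq1 : (comp (fun _ => 2) p (fun _ => ![(1 : ℝ), 0])) ∘ σ =
      (comp (fun _ => n) ![(1 : ℝ), 0] ![p, td]) ∘ Fin.cast hNN := by
    funext x
    have h1 : (comp (fun _ => 2) p (fun _ => ![(1 : ℝ), 0]) ∘ σ) x =
        comp (fun _ => 2) p (fun _ => ![(1 : ℝ), 0])
          (finSigmaEquiv (fun _ : Fin n => 2)
            ((swapSigma 2 n) ((finSigmaEquiv (fun _ : Fin 2 => n)).symm (Fin.cast hNN x)))) :=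
      rfl
    rw [h1, key1 ((finSigmaEquiv (fun _ : Fin 2 => n)).symm (Fin.cast hNN x)),
      Equiv.apply_symm_apply]
    rfl
  have eq2 : (comp (fun _ => 2) p (fun i => ![S * r i / p i, 1 - S * r i / p i])) ∘ σ =
      (comp (fun _ => n) ![S, 1 - S] ![r, td]) ∘ Fin.cast hNN := by
    funext x
    have h1 : (comp (fun _ => 2) p (fun i => ![S * r i / p i, 1 - S * r i / p i]) ∘ σ) x =
        comp (fun _ => 2) p (fun i => ![S * r i / p i, 1 - S * r i / p i])
          (finSigmaEquiv (fun _ : Fin n => 2)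
            ((swapSigma 2 n) ((finSigmaEquiv (fun _ : Fin 2 => n)).symm (Fin.cast hNN x)))) :=
      rfl
    rw [h1, key2 ((finSigmaEquiv (fun _ : Fin 2 => n)).symm (Fin.cast hNN x)),
      Equiv.apply_symm_apply]
    rfl
  have hRelA : RelPair (comp (fun _ => 2) p (fun _ => ![(1 : ℝ), 0]))
      (comp (fun _ => 2) p (fun i => ![S * r i / p i, 1 - S * r i / p i])) :=
    relPair_comp hppair hPpair
  have hkey : I (∑ _i : Fin n, 2) (comp (fun _ => 2) p (fun _ => ![(1 : ℝ), 0]))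
      (comp (fun _ => 2) p (fun i => ![S * r i / p i, 1 - S * r i / p i])) =
      I (∑ _i : Fin 2, n) (comp (fun _ => n) ![(1 : ℝ), 0] ![p, td])
        (comp (fun _ => n) ![S, 1 - S] ![r, td]) := by
    rw [hS _ _ _ σ hRelA, eq1, eq2, ← myIcast I hNN]
  -- evaluate both sides
  have hA : ∀ i : Fin n, I 2 (![(1 : ℝ), 0]) (![S * r i / p i, 1 - S * r i / p i]) =
      -c * Real.log (S * r i / p i) := by
    intro i
    exact hc _ ⟨div_pos (mul_pos hS0 (hr i)) (hpos i),
      (div_le_one (hpos i)).2 (le_of_lt (hSrlt i))⟩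
  have hB : I 2 (![(1 : ℝ), 0]) (![S, 1 - S]) = -c * Real.log S := hc _ ⟨hS0, by linarith⟩
  rw [hCA, hCB] at hkey
  rw [hV n p hpr.1, hB, Fin.sum_univ_two] at hkey
  simp only [Matrix.cons_val_zero, Matrix.cons_val_one, Matrix.head_cons, one_mul,
    zero_mul, add_zero, zero_add] at hkey
  rw [Finset.sum_congr rfl (fun i _ => by rw [hA i])] at hkey
  -- final computation
  have hrel : relent p r = ∑ i, p i * Real.log (p i / r i) :=
    Finset.sum_congr rfl (fun i _ => if_pos (hpos i))
  have hterm : ∀ i ∈ Finset.univ, p i * (-c * Real.log (S * r i / p i)) =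
      c * (p i * Real.log (p i / r i)) - c * Real.log S * p i := by
    intro i _
    rw [Real.log_div (ne_of_gt (mul_pos hS0 (hr i))) (ne_of_gt (hpos i)),
      Real.log_mul (ne_of_gt hS0) (ne_of_gt (hr i)),
      Real.log_div (ne_of_gt (hpos i)) (ne_of_gt (hr i))]
    ring
  rw [Finset.sum_congr rfl hterm, Finset.sum_sub_distrib, ← Finset.mul_sum,
    ← Finset.mul_sum, hpr.1.2, ← hrel, mul_one] at hkey
  linarith
end

section
/- The sequence of functions J_n : A_n → ℝ defined by J_n(p‖r) = ∑_{i : p_i > 0} p_i log(1/r_i) satisfies the measurability-in-second-argument, symmetry, and chain rule properties, but does not satisfy the vanishing property: there exist n and p ∈ Δ_n with J_n(p‖p) ≠ 0. -/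
open Finset MeasureTheory

/-- The quantity `J(p ‖ r) = ∑_{i : pᵢ > 0} pᵢ log (1 / rᵢ)`. -/
noncomputable def Jent : ∀ n : ℕ, (Fin n → ℝ) → (Fin n → ℝ) → ℝ :=
  fun _ p r => ∑ i, if 0 < p i then p i * Real.log (1 / r i) else 0

/-!
`J(p ‖ r)` is the cross entropy of `p` relative to `r`. Since `log (1 / (w'ᵢ p'ᵢⱼ))` splits as
`log (1 / w'ᵢ) + log (1 / p'ᵢⱼ)` and each `pⁱ` sums to one, the cross entropy obeys the chain rule;
symmetry and measurability are immediate. But `J(p ‖ p)` is the Shannon entropy of `p`, which is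
`log n ≠ 0` for the uniform distribution on `n ≥ 2` points.
-/

noncomputable def jentTerm (a b : ℝ) : ℝ :=
  if 0 < a then a * Real.log (1 / b) else 0

lemma Jent_eq_sum_jentTerm (n : ℕ) (p r : Fin n → ℝ) :
    Jent n p r = ∑ i, jentTerm (p i) (r i) := rfl

lemma measurable_Jent (n : ℕ) (p : Fin n → ℝ) : Measurable (Jent n p) := by
  refine Finset.measurable_sum _ fun i _ => ?_
  by_cases h : 0 < p i
  · simp only [if_pos h]
    exact ((measurable_pi_apply i).const_div 1).log.const_mul _
  · simp only [if_neg h]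
    exact measurable_const

lemma Jent_comp_perm (n : ℕ) (p r : Fin n → ℝ) (σ : Equiv.Perm (Fin n)) :
    Jent n (p ∘ σ) (r ∘ σ) = Jent n p r :=
  Fintype.sum_equiv σ _ _ fun _ => rfl

lemma jentTerm_mul {a a' b b' : ℝ} (ha : 0 ≤ a) (hb : 0 ≤ b)
    (ha' : a' = 0 → a = 0) (hb' : b' = 0 → b = 0) :
    jentTerm (a * b) (a' * b') = b * jentTerm a a' + a * jentTerm b b' := by
  rcases ha.eq_or_lt with rfl | ha
  · simp [jentTerm]
  rcases hb.eq_or_lt with rfl | hb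
  · simp [jentTerm]
  have ha'0 : a' ≠ 0 := fun h => ha.ne' (ha' h)
  have hb'0 : b' ≠ 0 := fun h => hb.ne' (hb' h)
  simp only [jentTerm, if_pos (mul_pos ha hb), if_pos ha, if_pos hb, one_div, Real.log_inv,
    Real.log_mul ha'0 hb'0]
  ring

lemma sum_comp_comp {n : ℕ} (k : Fin n → ℕ) (w : Fin n → ℝ) (p : ∀ i, Fin (k i) → ℝ)
    (w' : Fin n → ℝ) (p' : ∀ i, Fin (k i) → ℝ) (f : ℝ → ℝ → ℝ) :
    ∑ j, f (comp k w p j) (comp k w' p' j) = ∑ i, ∑ j, f (w i * p i j) (w' i * p' i j) :=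
  (Fintype.sum_equiv (finSigmaEquiv k).symm _
    (fun x : Σ i, Fin (k i) => f (w x.1 * p x.1 x.2) (w' x.1 * p' x.1 x.2)) fun _ => rfl).trans
    (Fintype.sum_sigma _)

lemma Jent_comp_comp {n : ℕ} (k : Fin n → ℕ) (w w' : Fin n → ℝ) (p p' : ∀ i, Fin (k i) → ℝ)
    (hw : RelPair w w') (hp : ∀ i, RelPair (p i) (p' i)) :
    Jent (∑ i, k i) (comp k w p) (comp k w' p') =
      Jent n w w' + ∑ i, w i * Jent (k i) (p i) (p' i) := by
  have hsplit : ∀ i, ∑ j, jentTerm (w i * p i j) (w' i * p' i j) =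
      jentTerm (w i) (w' i) + w i * Jent (k i) (p i) (p' i) := fun i => by
    simp only [jentTerm_mul (hw.1.1 i) ((hp i).1.1 _) (hw.2.2 i) ((hp i).2.2 _),
      Finset.sum_add_distrib, ← Finset.sum_mul, (hp i).1.2, one_mul, ← Finset.mul_sum,
      Jent_eq_sum_jentTerm]
  simp only [Jent_eq_sum_jentTerm, sum_comp_comp, hsplit, Finset.sum_add_distrib]

lemma Jent_uniform {n : ℕ} (hn : n ≠ 0) :
    Jent n (fun _ => 1 / n) (fun _ => 1 / n) = Real.log n := by
  have hn' : (0 : ℝ) < n := by positivity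
  simp only [Jent_eq_sum_jentTerm, jentTerm, if_pos (one_div_pos.2 hn'), one_div_one_div,
    Finset.sum_const, Finset.card_univ, Fintype.card_fin, nsmul_eq_mul]
  field_simp

lemma isDist_uniform {n : ℕ} (hn : n ≠ 0) : IsDist (fun _ : Fin n => (1 : ℝ) / n) :=
  ⟨fun _ => by positivity, by simp [hn]⟩

/-- `J` satisfies measurability in the second argument, symmetry and the chain
rule, but not vanishing. -/
theorem J_counterexample :
    MeasurableSecond Jent ∧ SymmRel Jent ∧ ChainRule Jent ∧
      ∃ (n : ℕ) (p : Fin n → ℝ), IsDist p ∧ Jent n p p ≠ 0 := by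
  refine ⟨fun n p _ => (measurable_Jent n p).nullMeasurable,
    fun n p r σ _ => (Jent_comp_perm n p r σ).symm,
    fun n k w w' p p' hw hp => Jent_comp_comp k w w' p p' hw hp,
    2, _, isDist_uniform two_ne_zero, ?_⟩
  rw [Jent_uniform two_ne_zero]
  exact (Real.log_pos (by norm_num)).ne'
end

section
/- Let q ∈ ℝ with q ≠ 1, and let (I_n : Δ_n → ℝ)_{n ≥ 1} be a sequence of functions. The following are equivalent: (1) I satisfies q-multiplicativity, i.e. I(w ⊗ p) = I_n(w) + (∑_{i : w_i > 0} w_i^q) · I_k(p) for all n, k ≥ 1, w ∈ Δ_n, p ∈ Δ_k, and symmetry, i.e. I_n(p) = I_n(pσ) for all p ∈ Δ_n and permutations σ of {1,…,n}; (2) there exists c ∈ ℝ such that I_n = c · S_q on Δ_n for all n, where S_q(p) = (1/(1−q)) (∑_{i : p_i > 0} p_i^q − 1) is the q-logarithmic (Tsallis) entropy. -/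
open Finset MeasureTheory

/-- The tensor product `w ⊗ p = (w₁p₁, …, w₁p_k, …, wₙp₁, …, wₙp_k) ∈ Δ_{nk}`. -/
def tensor {n k : ℕ} (w : Fin n → ℝ) (p : Fin k → ℝ) : Fin (n * k) → ℝ :=
  fun j => w (finProdFinEquiv.symm j).1 * p (finProdFinEquiv.symm j).2

/-- The q-logarithmic (Tsallis) entropy `S_q(p) = (1/(1-q)) (∑_{i : pᵢ > 0} pᵢ^q - 1)`. -/
noncomputable def qEntropy (q : ℝ) {n : ℕ} (p : Fin n → ℝ) : ℝ :=
  (1 / (1 - q)) * ((∑ i, if 0 < p i then p i ^ q else 0) - 1)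

/-- q-multiplicativity: `I(w ⊗ p) = I(w) + (∑_{i : wᵢ > 0} wᵢ^q) I(p)`. -/
def QMult (q : ℝ) (I : ∀ n : ℕ, (Fin n → ℝ) → ℝ) : Prop :=
  ∀ (n k : ℕ) (w : Fin n → ℝ) (p : Fin k → ℝ), IsDist w → IsDist p →
    I (n * k) (tensor w p) = I n w + (∑ i, if 0 < w i then w i ^ q else 0) * I k p

/-- Symmetry: `I(p) = I(pσ)` for every permutation `σ`, where `(pσ)ᵢ = p_{σ(i)}`. -/
def SymmEnt (I : ∀ n : ℕ, (Fin n → ℝ) → ℝ) : Prop :=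
  ∀ (n : ℕ) (p : Fin n → ℝ) (σ : Equiv.Perm (Fin n)), IsDist p → I n p = I n (p ∘ σ)

/-- The tensor product of distributions is a distribution. -/
lemma isDist_tensor {n k : ℕ} {w : Fin n → ℝ} {p : Fin k → ℝ}
    (hw : IsDist w) (hp : IsDist p) : IsDist (tensor w p) := by
  constructor
  · intro j
    exact mul_nonneg (hw.1 _) (hp.1 _)
  · have : ∑ j : Fin (n * k), tensor w p j
        = ∑ x : Fin n × Fin k, w x.1 * p x.2 :=
      Equiv.sum_comp finProdFinEquiv.symm (fun x => w x.1 * p x.2)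
    rw [this, Fintype.sum_prod_type, ← Finset.sum_mul_sum, hw.2, hp.2, one_mul]

/-- A permuted distribution is a distribution. -/
lemma isDist_comp_perm {n : ℕ} {p : Fin n → ℝ} (hp : IsDist p)
    (σ : Equiv.Perm (Fin n)) : IsDist (p ∘ σ) := by
  refine ⟨fun i => hp.1 _, ?_⟩
  rw [show (∑ i, (p ∘ σ) i) = ∑ i, p i from Equiv.sum_comp σ p, hp.2]

/-- The q-power sum of a tensor product is the product of the q-power sums. -/
lemma qsum_tensor (q : ℝ) {n k : ℕ} {w : Fin n → ℝ} {p : Fin k → ℝ}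
    (hw : ∀ i, 0 ≤ w i) (hp : ∀ i, 0 ≤ p i) :
    (∑ j, if 0 < tensor w p j then tensor w p j ^ q else 0)
      = (∑ i, if 0 < w i then w i ^ q else 0) * (∑ i, if 0 < p i then p i ^ q else 0) := by
  have h1 : (∑ j, if 0 < tensor w p j then tensor w p j ^ q else 0)
      = ∑ x : Fin n × Fin k, (if 0 < w x.1 * p x.2 then (w x.1 * p x.2) ^ q else 0) :=
    Equiv.sum_comp finProdFinEquiv.symm
      (fun x : Fin n × Fin k => if 0 < w x.1 * p x.2 then (w x.1 * p x.2) ^ q else 0)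
  rw [h1, Fintype.sum_prod_type, Finset.sum_mul_sum]
  refine Finset.sum_congr rfl fun a _ => Finset.sum_congr rfl fun b _ => ?_
  by_cases h1 : 0 < w a
  · by_cases h2 : 0 < p b
    · rw [if_pos (mul_pos h1 h2), if_pos h1, if_pos h2,
        Real.mul_rpow (hw a) (hp b)]
    · have : p b = 0 := le_antisymm (not_lt.1 h2) (hp b)
      simp [this]
  · have : w a = 0 := le_antisymm (not_lt.1 h1) (hw a)
    simp [this]

/-- q-entropy is multiplicative on tensor products. -/
lemma qEntropy_tensor (q : ℝ) {n k : ℕ} {w : Fin n → ℝ} {p : Fin k → ℝ}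
    (hw : ∀ i, 0 ≤ w i) (hp : ∀ i, 0 ≤ p i) :
    qEntropy q (tensor w p)
      = qEntropy q w + (∑ i, if 0 < w i then w i ^ q else 0) * qEntropy q p := by
  unfold qEntropy
  rw [qsum_tensor q hw hp]
  ring

/-- q-entropy is invariant under permutations. -/
lemma qEntropy_comp_perm (q : ℝ) {n : ℕ} (p : Fin n → ℝ) (σ : Equiv.Perm (Fin n)) :
    qEntropy q (p ∘ σ) = qEntropy q p := by
  unfold qEntropy
  rw [show (∑ i, if 0 < (p ∘ σ) i then (p ∘ σ) i ^ q else 0)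
      = ∑ i, if 0 < p i then p i ^ q else 0 from
    Equiv.sum_comp σ (fun i => if 0 < p i then p i ^ q else 0)]

/-- Evaluating `I` along a cast of indices. -/
lemma I_congr_s8 (I : ∀ n : ℕ, (Fin n → ℝ) → ℝ) {m m' : ℕ} (h : m' = m) (f : Fin m → ℝ) :
    I m f = I m' (f ∘ finCongr h) := by
  subst h
  have : f ∘ finCongr rfl = f := by
    funext j; simp
  rw [this]

/-- Characterization of q-logarithmic (Tsallis) entropy: for `q ≠ 1`, a sequence of
functions `(Iₙ : Δₙ → ℝ)` is q-multiplicative and symmetric if and only if it is a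
scalar multiple of `S_q`. -/
theorem qEntropy_characterization (q : ℝ) (hq : q ≠ 1)
    (I : ∀ n : ℕ, (Fin n → ℝ) → ℝ) :
    (QMult q I ∧ SymmEnt I) ↔
      ∃ c : ℝ, ∀ (n : ℕ) (p : Fin n → ℝ), IsDist p → I n p = c * qEntropy q p := by
  have h1q : (1 : ℝ) - q ≠ 0 := sub_ne_zero.2 (Ne.symm hq)
  constructor
  · rintro ⟨hQ, hS⟩
    -- Key symmetry relation: for all distributions w, p:
    -- (1 - P p) * I n w = (1 - P w) * I k p
    have key : ∀ (n k : ℕ) (w : Fin n → ℝ) (p : Fin k → ℝ), IsDist w → IsDist p →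
        ((∑ i, if 0 < p i then p i ^ q else 0) - 1) * I n w
          = ((∑ i, if 0 < w i then w i ^ q else 0) - 1) * I k p := by
      intro n k w p hw hp
      have h1 := hQ n k w p hw hp
      have h2 := hQ k n p w hp hw
      -- tensor w p is a permutation (and cast) of tensor p w
      have h3 : I (n * k) (tensor w p) = I (k * n) (tensor p w) := by
        set σ : Equiv.Perm (Fin (n * k)) :=
          (finCongr (mul_comm n k)).trans
            (finProdFinEquiv.symm.trans
              ((Equiv.prodComm (Fin k) (Fin n)).trans finProdFinEquiv)) with hσ
        have heq : tensor p w ∘ finCongr (mul_comm n k) = tensor w p ∘ σ := by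
          funext j
          simp only [hσ, Function.comp_apply, Equiv.trans_apply, tensor,
            Equiv.symm_apply_apply, Equiv.prodComm_apply, Prod.fst_swap, Prod.snd_swap]
          ring
        calc I (n * k) (tensor w p)
            = I (n * k) (tensor w p ∘ σ) := hS _ _ σ (isDist_tensor hw hp)
          _ = I (n * k) (tensor p w ∘ finCongr (mul_comm n k)) := by rw [heq]
          _ = I (k * n) (tensor p w) := (I_congr_s8 I (mul_comm n k) (tensor p w)).symm
      rw [h3, h2] at h1
      linarith [h1]
    -- The uniform distribution on two points
    set u2 : Fin 2 → ℝ := fun _ => 1 / 2 with hu2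
    have hu2d : IsDist u2 := by
      constructor
      · intro i; norm_num [hu2]
      · norm_num [hu2, Fin.sum_univ_two]
    set W2 : ℝ := ∑ i : Fin 2, if 0 < u2 i then u2 i ^ q else 0 with hW2
    have hW2v : W2 = 2 * (1 / 2 : ℝ) ^ q := by
      rw [hW2]
      norm_num [hu2, Fin.sum_univ_two]
    have hW2ne : W2 - 1 ≠ 0 := by
      rw [hW2v]
      have h2q : (2 : ℝ) * (1 / 2 : ℝ) ^ q = (2 : ℝ) ^ (1 - q) := by
        rw [one_div, Real.inv_rpow (by norm_num : (0:ℝ) ≤ 2),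
          Real.rpow_sub (by norm_num : (0:ℝ) < 2), Real.rpow_one]
        field_simp
      rw [h2q]
      have hinj : Function.Injective fun y : ℝ => (2 : ℝ) ^ y := by
        have : StrictMono fun y : ℝ => (2 : ℝ) ^ y :=
          fun a b h => (Real.rpow_lt_rpow_left_iff (by norm_num : (1:ℝ) < 2)).2 h
        exact this.injective
      intro hcon
      have : (2 : ℝ) ^ (1 - q) = (2 : ℝ) ^ (0 : ℝ) := by
        rw [Real.rpow_zero]; linarith
      exact h1q (hinj this)
    refine ⟨(1 - q) * I 2 u2 / (W2 - 1), ?_⟩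
    intro n p hp
    have hk := key 2 n u2 p hu2d hp
    rw [← hW2] at hk
    -- hk : (P p - 1) * I 2 u2 = (W2 - 1) * I n p
    have hInp : I n p
        = (((∑ i, if 0 < p i then p i ^ q else 0) - 1) * I 2 u2) / (W2 - 1) := by
      rw [eq_div_iff hW2ne]; linarith [hk]
    unfold qEntropy
    rw [hInp]
    field_simp
  · rintro ⟨c, hc⟩
    constructor
    · intro n k w p hw hp
      rw [hc _ _ (isDist_tensor hw hp), hc _ _ hw, hc _ _ hp,
        qEntropy_tensor q hw.1 hp.1]
      ring
    · intro n p σ hp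
      rw [hc _ _ hp, hc _ _ (isDist_comp_perm hp σ), qEntropy_comp_perm]
end

section
/- Let q ∈ ℝ. The q-logarithmic entropy S_q satisfies the q-chain rule: for all n ≥ 1, k_1,…,k_n ≥ 1, w ∈ Δ_n, and p^i ∈ Δ_{k_i} for each i ∈ {1,…,n}, S_q(w∘(p^1,…,p^n)) = S_q(w) + ∑_{i : w_i > 0} w_i^q S_q(p^i). -/
open Finset MeasureTheory

/-- The q-logarithm `ln_q(x) = ∫₁ˣ t⁻ᑫ dt`. -/
noncomputable def lnq (q x : ℝ) : ℝ := ∫ t in (1 : ℝ)..x, t ^ (-q)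

/-- The q-logarithmic entropy `S_q(p) = ∑_{i : pᵢ > 0} pᵢ ln_q (1 / pᵢ)`. -/
noncomputable def qEntropyLn (q : ℝ) {n : ℕ} (p : Fin n → ℝ) : ℝ :=
  ∑ i, if 0 < p i then p i * lnq q (1 / p i) else 0

lemma lnq_eval (q : ℝ) {x : ℝ} (hx : 0 < x) :
    lnq q x = if q = 1 then Real.log x else (x ^ (1 - q) - 1) / (1 - q) := by
  unfold lnq
  split_ifs with h
  · subst h
    simp only [Real.rpow_neg_one]
    rw [integral_inv (by
      intro h0
      rcases Set.mem_uIcc.mp h0 with ⟨h1,_⟩|⟨_,h2⟩ <;> linarith)]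
    simp
  · rw [integral_rpow (Or.inr ⟨by simpa using fun hq => h (by linarith), by
      intro h0
      rcases Set.mem_uIcc.mp h0 with ⟨h1,_⟩|⟨_,h2⟩ <;> linarith⟩)]
    rw [Real.one_rpow]
    ring_nf

lemma lnq_mul (q : ℝ) {a b : ℝ} (ha : 0 < a) (hb : 0 < b) :
    lnq q (a * b) = lnq q a + a ^ (1 - q) * lnq q b := by
  rw [lnq_eval q (mul_pos ha hb), lnq_eval q ha, lnq_eval q hb]
  split_ifs with h
  · subst h
    rw [Real.log_mul ha.ne' hb.ne']
    simp
  · rw [Real.mul_rpow ha.le hb.le]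
    have : (1:ℝ) - q ≠ 0 := fun hq => h (by linarith)
    field_simp
    ring


/-- The q-chain rule for q-logarithmic entropy:
`S_q(w ∘ (p¹, …, pⁿ)) = S_q(w) + ∑_{i : wᵢ > 0} wᵢ^q S_q(pⁱ)`. -/
theorem qEntropy_chainRule (q : ℝ) (n : ℕ) (k : Fin n → ℕ) (w : Fin n → ℝ)
    (p : ∀ i, Fin (k i) → ℝ) (hw : IsDist w) (hp : ∀ i, IsDist (p i)) :
    qEntropyLn q (comp k w p) =
      qEntropyLn q w + ∑ i, if 0 < w i then w i ^ q * qEntropyLn q (p i) else 0 := by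
  have key : qEntropyLn q (comp k w p)
      = ∑ i, ∑ j, (if 0 < w i * p i j then (w i * p i j) * lnq q (1 / (w i * p i j)) else 0) := by
    rw [qEntropyLn, ← Equiv.sum_comp (finSigmaEquiv k)
      (fun x => if 0 < comp k w p x then comp k w p x * lnq q (1 / comp k w p x) else 0),
      ← Finset.univ_sigma_univ, Finset.sum_sigma]
    refine Finset.sum_congr rfl fun i _ => Finset.sum_congr rfl fun j _ => ?_
    have he : (finSigmaEquiv k).symm ((finSigmaEquiv k) ⟨i, j⟩) = ⟨i, j⟩ :=
      Equiv.symm_apply_apply _ _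
    rw [comp, he]
  rw [key, qEntropyLn, ← Finset.sum_add_distrib]
  refine Finset.sum_congr rfl fun i _ => ?_
  by_cases hwi : 0 < w i
  · have hterm : ∀ j, (if 0 < w i * p i j then (w i * p i j) * lnq q (1 / (w i * p i j)) else 0)
        = (w i * lnq q (1 / w i)) * (if 0 < p i j then p i j else 0)
          + w i ^ q * (if 0 < p i j then p i j * lnq q (1 / p i j) else 0) := by
      intro j
      by_cases hpj : 0 < p i j
      · have hpos : 0 < w i * p i j := mul_pos hwi hpj
        rw [if_pos hpos, if_pos hpj, if_pos hpj]
        have h1 : 1 / (w i * p i j) = (1 / w i) * (1 / p i j) := by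
          rw [one_div, mul_inv, one_div, one_div]
        rw [h1, lnq_mul q (by positivity) (by positivity)]
        have h2 : (1 / w i) ^ (1 - q) = w i ^ (q - 1) := by
          rw [one_div, Real.inv_rpow hwi.le, ← Real.rpow_neg hwi.le, neg_sub]
        have h3 : w i * w i ^ (q - 1) = w i ^ q := by
          nth_rw 1 [← Real.rpow_one (w i)]
          rw [← Real.rpow_add hwi]
          ring_nf
        rw [h2, ← h3]
        ring
      · have hz : p i j = 0 := le_antisymm (not_lt.mp hpj) ((hp i).1 j)
        simp [hpj, hz]
    simp only [hterm]
    rw [Finset.sum_add_distrib, ← Finset.mul_sum, ← Finset.mul_sum]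
    have hsum1 : ∑ j, (if 0 < p i j then p i j else 0) = 1 := by
      rw [← (hp i).2]
      refine Finset.sum_congr rfl fun j _ => ?_
      by_cases h : 0 < p i j
      · simp [h]
      · simp [h, le_antisymm (not_lt.mp h) ((hp i).1 j)]
    rw [hsum1, mul_one, if_pos hwi, if_pos hwi, qEntropyLn]
  · have hz : w i = 0 := le_antisymm (not_lt.mp hwi) (hw.1 i)
    simp [hz, hwi]
end

section
/- Let q ∈ ℝ with q ≠ 1, and let (I_n : A_n → ℝ)_{n ≥ 1} be a sequence of functions. The following are equivalent: (1) I satisfies q-multiplicativity, i.e. I(w ⊗ p ‖ w̃ ⊗ p̃) = I_n(w‖w̃) + (∑_{i : w_i > 0} w_i^q w̃_i^{1−q}) · I_k(p‖p̃) for all n, k ≥ 1, (w,w̃) ∈ A_n, (p,p̃) ∈ A_k, and symmetry, i.e. I_n(p‖r) = I_n(pσ‖rσ) for all (p,r) ∈ A_n and permutations σ of {1,…,n}; (2) there exists c ∈ ℝ such that I_n = c · D_q on A_n for all n, where D_q(p‖r) = (1/(q−1)) (∑_{i : p_i > 0} p_i^q r_i^{1−q} − 1) is the q-logarithmic relative entropy.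 -/
open Finset MeasureTheory

/-- The q-logarithmic relative entropy
`D_q(p ‖ r) = (1/(q-1)) (∑_{i : pᵢ > 0} pᵢ^q rᵢ^{1-q} - 1)`. -/
noncomputable def qRelent (q : ℝ) {n : ℕ} (p r : Fin n → ℝ) : ℝ :=
  (1 / (q - 1)) * ((∑ i, if 0 < p i then p i ^ q * r i ^ (1 - q) else 0) - 1)

/-- q-multiplicativity for relative entropies:
`I(w ⊗ p ‖ w̃ ⊗ p̃) = I(w ‖ w̃) + (∑_{i : wᵢ > 0} wᵢ^q w̃ᵢ^{1-q}) I(p ‖ p̃)`. -/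
def QMultRel (q : ℝ) (I : ∀ n : ℕ, (Fin n → ℝ) → (Fin n → ℝ) → ℝ) : Prop :=
  ∀ (n k : ℕ) (w w' : Fin n → ℝ) (p p' : Fin k → ℝ),
    RelPair w w' → RelPair p p' →
    I (n * k) (tensor w p) (tensor w' p') =
      I n w w' + (∑ i, if 0 < w i then w i ^ q * w' i ^ (1 - q) else 0) * I k p p'

noncomputable def Sq (q : ℝ) {n : ℕ} (p r : Fin n → ℝ) : ℝ :=
  ∑ i, if 0 < p i then p i ^ q * r i ^ (1 - q) else 0

lemma relPair_tensor {n k : ℕ} {w w' : Fin n → ℝ} {p p' : Fin k → ℝ}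
    (hw : RelPair w w') (hp : RelPair p p') :
    RelPair (tensor w p) (tensor w' p') := by
  obtain ⟨⟨hw1, hw2⟩, ⟨hw1', hw2'⟩, hwac⟩ := hw
  obtain ⟨⟨hp1, hp2⟩, ⟨hp1', hp2'⟩, hpac⟩ := hp
  have sum_tensor : ∀ (a : Fin n → ℝ) (b : Fin k → ℝ),
      ∑ j, tensor a b j = (∑ i, a i) * (∑ l, b l) := by
    intro a b
    rw [← Equiv.sum_comp finProdFinEquiv (tensor a b)]
    simp only [tensor, Equiv.symm_apply_apply]
    rw [Fintype.sum_prod_type, Finset.sum_mul_sum]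
  refine ⟨⟨fun j => mul_nonneg (hw1 _) (hp1 _), by rw [sum_tensor, hw2, hp2]; ring⟩,
    ⟨fun j => mul_nonneg (hw1' _) (hp1' _), by rw [sum_tensor, hw2', hp2']; ring⟩, ?_⟩
  intro j hj
  unfold tensor
  rcases mul_eq_zero.1 hj with h | h
  · rw [hwac _ h, zero_mul]
  · rw [hpac _ h, mul_zero]

lemma Sq_tensor (q : ℝ) {n k : ℕ} {w w' : Fin n → ℝ} {p p' : Fin k → ℝ}
    (hw : RelPair w w') (hp : RelPair p p') :
    Sq q (tensor w p) (tensor w' p') = Sq q w w' * Sq q p p' := by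
  obtain ⟨⟨hw1, _⟩, ⟨hw1', _⟩, _⟩ := hw
  obtain ⟨⟨hp1, _⟩, ⟨hp1', _⟩, _⟩ := hp
  unfold Sq
  rw [← Equiv.sum_comp finProdFinEquiv
    (fun j => if 0 < tensor w p j then tensor w p j ^ q * tensor w' p' j ^ (1 - q) else 0)]
  rw [Fintype.sum_prod_type, Finset.sum_mul_sum]
  refine Finset.sum_congr rfl fun i _ => Finset.sum_congr rfl fun l _ => ?_
  simp only [tensor, Equiv.symm_apply_apply]
  have hiff : 0 < w i * p l ↔ 0 < w i ∧ 0 < p l := by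
    constructor
    · intro h
      rcases mul_pos_iff.1 h with ⟨h1, h2⟩ | ⟨h1, h2⟩
      · exact ⟨h1, h2⟩
      · exact absurd h1 (not_lt.2 (hw1 i))
    · exact fun ⟨h1, h2⟩ => mul_pos h1 h2
  by_cases h1 : 0 < w i <;> by_cases h2 : 0 < p l <;>
    simp [hiff, h1, h2, Real.mul_rpow (hw1 i) (hp1 l), Real.mul_rpow (hw1' i) (hp1' l)] <;>
    ring

lemma relPair_perm {n : ℕ} {p r : Fin n → ℝ} (σ : Equiv.Perm (Fin n))
    (h : RelPair p r) : RelPair (p ∘ σ) (r ∘ σ) := by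
  obtain ⟨⟨h1, h2⟩, ⟨h1', h2'⟩, hac⟩ := h
  exact ⟨⟨fun i => h1 _, by simpa [Function.comp] using (Equiv.sum_comp σ p).trans h2⟩,
    ⟨fun i => h1' _, by simpa [Function.comp] using (Equiv.sum_comp σ r).trans h2'⟩,
    fun i hi => hac _ hi⟩

lemma Sq_perm (q : ℝ) {n : ℕ} (p r : Fin n → ℝ) (σ : Equiv.Perm (Fin n)) :
    Sq q (p ∘ σ) (r ∘ σ) = Sq q p r := by
  unfold Sq
  exact Equiv.sum_comp σ (fun i => if 0 < p i then p i ^ q * r i ^ (1 - q) else 0)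

lemma I_cast (I : ∀ n : ℕ, (Fin n → ℝ) → (Fin n → ℝ) → ℝ) {m m' : ℕ} (h : m = m')
    (f g : Fin m' → ℝ) : I m' f g = I m (f ∘ Fin.cast h) (g ∘ Fin.cast h) := by
  subst h; rfl

lemma swap_key {q : ℝ} {I : ∀ n : ℕ, (Fin n → ℝ) → (Fin n → ℝ) → ℝ}
    (hm : QMultRel q I) (hs : SymmRel I) {n k : ℕ} {w w' : Fin n → ℝ} {p p' : Fin k → ℝ}
    (hw : RelPair w w') (hp : RelPair p p') :
    I n w w' + Sq q w w' * I k p p' = I k p p' + Sq q p p' * I n w w' := by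
  have h1 := hm n k w w' p p' hw hp
  have h2 := hm k n p p' w w' hp hw
  have h : n * k = k * n := Nat.mul_comm n k
  set σ : Equiv.Perm (Fin (n * k)) :=
    (finCongr h).trans (finProdFinEquiv.symm.trans
      ((Equiv.prodComm (Fin k) (Fin n)).trans finProdFinEquiv)) with hσ
  have e2 : ∀ (a : Fin n → ℝ) (b : Fin k → ℝ), tensor b a ∘ Fin.cast h = tensor a b ∘ σ := by
    intro a b
    funext j
    simp [tensor, hσ, Equiv.symm_apply_apply, mul_comm]
  have e3 := hs (n * k) (tensor w p) (tensor w' p') σ (relPair_tensor hw hp)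
  rw [← e2, ← e2] at e3
  rw [← I_cast I h] at e3
  rw [e3, h2] at h1
  have : Sq q w w' = ∑ i, if 0 < w i then w i ^ q * w' i ^ (1 - q) else 0 := rfl
  rw [← this] at h1
  have : Sq q p p' = ∑ i, if 0 < p i then p i ^ q * p' i ^ (1 - q) else 0 := rfl
  rw [← this] at h1
  linarith

lemma qRelent_tensor (q : ℝ) {n k : ℕ} {w w' : Fin n → ℝ} {p p' : Fin k → ℝ}
    (hw : RelPair w w') (hp : RelPair p p') :
    qRelent q (tensor w p) (tensor w' p') = qRelent q w w' + Sq q w w' * qRelent q p p' := by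
  have h := Sq_tensor q hw hp
  unfold Sq at h
  unfold qRelent Sq
  rw [h]
  ring

/-- Characterization of q-logarithmic relative entropy: for `q ≠ 1`, a sequence of
functions `(Iₙ : Aₙ → ℝ)` is q-multiplicative and symmetric if and only if it is a
scalar multiple of `D_q`. -/
theorem qRelent_characterization (q : ℝ) (hq : q ≠ 1)
    (I : ∀ n : ℕ, (Fin n → ℝ) → (Fin n → ℝ) → ℝ) :
    (QMultRel q I ∧ SymmRel I) ↔
      ∃ c : ℝ, ∀ (n : ℕ) (p r : Fin n → ℝ), RelPair p r →
        I n p r = c * qRelent q p r := by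
  constructor
  · rintro ⟨hm, hs⟩
    set u : Fin 2 → ℝ := ![1, 0] with hu
    set v : Fin 2 → ℝ := ![1/2, 1/2] with hv
    have hpair : RelPair u v := by
      refine ⟨⟨fun i => ?_, ?_⟩, ⟨fun i => ?_, ?_⟩, fun i hi => ?_⟩
      · fin_cases i <;> norm_num [hu, hv]
      · simp [Fin.sum_univ_two, hu]
      · fin_cases i <;> norm_num [hu, hv]
      · norm_num [Fin.sum_univ_two, hv]
      · exfalso; revert hi; fin_cases i <;> norm_num [hu, hv]
    have hSu : Sq q u v = (2:ℝ) ^ (q - 1) := by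
      unfold Sq
      rw [Fin.sum_univ_two]
      norm_num [hu, hv]
      calc ((1:ℝ)/2) ^ (1 - q) = ((2:ℝ)⁻¹) ^ (1 - q) := by norm_num
        _ = ((2:ℝ) ^ (1 - q))⁻¹ := Real.inv_rpow (by norm_num) _
        _ = (2:ℝ) ^ (-(1 - q)) := (Real.rpow_neg (by norm_num) _).symm
        _ = (2:ℝ) ^ (q - 1) := by ring_nf
    have hd : (2:ℝ) ^ (q - 1) - 1 ≠ 0 := by
      intro h
      apply hq
      have h2 : (2:ℝ) ^ (q - 1) = 1 := by linarith
      have hl := Real.log_rpow (by norm_num : (0:ℝ) < 2) (q - 1)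
      rw [h2, Real.log_one] at hl
      have hlog : Real.log 2 ≠ 0 := ne_of_gt (Real.log_pos (by norm_num))
      have : q - 1 = 0 := by
        rcases mul_eq_zero.1 hl.symm with h' | h'
        · exact h'
        · exact absurd h' hlog
      linarith
    have hq1 : q - 1 ≠ 0 := sub_ne_zero.mpr hq
    refine ⟨I 2 u v * (q - 1) / ((2:ℝ) ^ (q - 1) - 1), fun n p r hpr => ?_⟩
    have key := swap_key hm hs hpair hpr
    rw [hSu] at key
    have hval : I n p r = I 2 u v * (Sq q p r - 1) / ((2:ℝ) ^ (q - 1) - 1) := by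
      field_simp
      linarith [key]
    have hqr : qRelent q p r = (1 / (q - 1)) * (Sq q p r - 1) := rfl
    rw [hval, hqr]
    field_simp
  · rintro ⟨c, hc⟩
    constructor
    · intro n k w w' p p' hw hp
      rw [hc _ _ _ (relPair_tensor hw hp), hc _ _ _ hw, hc _ _ _ hp,
        show (∑ i, if 0 < w i then w i ^ q * w' i ^ (1 - q) else 0) = Sq q w w' from rfl,
        qRelent_tensor q hw hp]
      ring
    · intro n p r σ h
      rw [hc _ _ _ h, hc _ _ _ (relPair_perm σ h)]
      have hsp := Sq_perm q p r σ
      unfold Sq at hsp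
      unfold qRelent
      rw [hsp]
end

section
/- Let q ∈ ℝ with q ≠ 1. The q-logarithmic relative entropy D_q satisfies the chain rule: for all n ≥ 1, k_1,…,k_n ≥ 1, (w,w̃) ∈ A_n, and (p^i,p̃^i) ∈ A_{k_i} for each i ∈ {1,…,n}, D_q(w∘(p^1,…,p^n) ‖ w̃∘(p̃^1,…,p̃^n)) = D_q(w‖w̃) + ∑_{i : w_i > 0} w_i^q w̃_i^{1−q} D_q(p^i‖p̃^i). -/
open Finset MeasureTheory

/-- The chain rule for q-logarithmic relative entropy:
`D_q(w∘(p¹,…,pⁿ) ‖ w̃∘(p̃¹,…,p̃ⁿ)) = D_q(w ‖ w̃) + ∑_{i : wᵢ > 0} wᵢ^q w̃ᵢ^{1-q} D_q(pⁱ ‖ p̃ⁱ)`. -/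
theorem qRelent_chainRule (q : ℝ) (hq : q ≠ 1) (n : ℕ) (k : Fin n → ℕ)
    (w w' : Fin n → ℝ) (p p' : ∀ i, Fin (k i) → ℝ)
    (hw : RelPair w w') (hp : ∀ i, RelPair (p i) (p' i)) :
    qRelent q (comp k w p) (comp k w' p') =
      qRelent q w w' +
        ∑ i, if 0 < w i then w i ^ q * w' i ^ (1 - q) * qRelent q (p i) (p' i)
          else 0 := by
  classical
  obtain ⟨⟨hw0, hw1⟩, ⟨hw'0, hw'1⟩, hac⟩ := hw
  have hS : (∑ j, if 0 < comp k w p j then comp k w p j ^ q * comp k w' p' j ^ (1 - q) else 0)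
      = ∑ i, if 0 < w i then w i ^ q * w' i ^ (1 - q) *
          (∑ j, if 0 < p i j then p i j ^ q * p' i j ^ (1 - q) else 0) else 0 := by
    rw [← Equiv.sum_comp (finSigmaEquiv k)
      (fun j => if 0 < comp k w p j then comp k w p j ^ q * comp k w' p' j ^ (1 - q) else 0)]
    rw [← Finset.univ_sigma_univ, Finset.sum_sigma]
    refine Finset.sum_congr rfl fun i _ => ?_
    have hcomp : ∀ (v : Fin n → ℝ) (r : ∀ i, Fin (k i) → ℝ) (j : Fin (k i)),
        comp k v r (finSigmaEquiv k ⟨i, j⟩) = v i * r i j := by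
      intro v r j
      unfold comp
      rw [Equiv.symm_apply_apply]
    by_cases hwi : 0 < w i
    · have hw'i : 0 < w' i := by
        rcases (hw'0 i).lt_or_eq with h | h
        · exact h
        · exact absurd (hac i h.symm) (ne_of_gt hwi)
      simp only [hcomp, if_pos hwi, Finset.mul_sum]
      refine Finset.sum_congr rfl fun j _ => ?_
      by_cases hpj : 0 < p i j
      · rw [if_pos (mul_pos hwi hpj), if_pos hpj,
          Real.mul_rpow hwi.le ((hp i).1.1 j),
          Real.mul_rpow hw'i.le ((hp i).2.1.1 j)]
        ring
      · have hz : p i j = 0 := le_antisymm (not_lt.mp hpj) ((hp i).1.1 j)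
        simp [hz]
    · have hwi0 : w i = 0 := le_antisymm (not_lt.mp hwi) (hw0 i)
      simp [hcomp, hwi0, if_neg hwi]
  have hC : ∑ i, (if 0 < w i then w i ^ q * w' i ^ (1 - q) * qRelent q (p i) (p' i) else 0)
      = (1 / (q - 1)) * ((∑ i, if 0 < w i then w i ^ q * w' i ^ (1 - q) *
          (∑ j, if 0 < p i j then p i j ^ q * p' i j ^ (1 - q) else 0) else 0)
        - (∑ i, if 0 < w i then w i ^ q * w' i ^ (1 - q) else 0)) := by
    rw [mul_sub, Finset.mul_sum, Finset.mul_sum, ← Finset.sum_sub_distrib]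
    refine Finset.sum_congr rfl fun i _ => ?_
    by_cases hwi : 0 < w i <;> simp [hwi, qRelent] <;> ring
  rw [hC]
  unfold qRelent
  rw [hS]
  ring
end
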